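/- arXiv:2006.04458 — 3 statements merged into one kernel-verified Lean document; each statement's English description precedes it below -/
import Mathlib

section
/- For any real α > 0 and δ > 0, the two-sided sum ∑_{h ∈ ℤ} 2^{α h} e^{-2^h δ} is bounded above by (2/δ)^α · Γ(α) / log 2, where Γ is the Gamma function. -/
/-!
On `[h - 1, h]` the integrand `f x = b ^ (α x) e^{-b ^ x δ}` satisfies
`b ^ (α h) e^{-b ^ h δ} ≤ b ^ α f x` (the first factor increases, the second decreases in `x`),
so the sum is at most `b ^ α ∫ f`. The substitution `t = b ^ x` turns `∫ f` into
`(log b)⁻¹ ∫₀^∞ t ^ (α - 1) e^{-δ t} dt = δ ^ (-α) Γ(α) / log b`.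
-/

open MeasureTheory Set Real

section ExpSubstitution

variable {E : Type*} [NormedAddCommGroup E] [NormedSpace ℝ E]

theorem integrable_exp_smul_comp_exp_iff (g : ℝ → E) :
    Integrable (fun x => exp x • g (exp x)) ↔ IntegrableOn g (Ioi 0) := by
  rw [← range_exp, ← image_univ, ← integrableOn_univ]
  simpa [abs_of_pos (exp_pos _)] using (integrableOn_image_iff_integrableOn_abs_deriv_smul
    MeasurableSet.univ (fun x _ => (hasDerivAt_exp x).hasDerivWithinAt)
    exp_injective.injOn g).symm

theorem integral_exp_smul_comp_exp (g : ℝ → E) :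
    ∫ x, exp x • g (exp x) = ∫ y in Ioi 0, g y := by
  rw [← range_exp, ← image_univ, ← setIntegral_univ]
  simpa [abs_of_pos (exp_pos _)] using (integral_image_eq_integral_abs_deriv_smul
    MeasurableSet.univ (fun x _ => (hasDerivAt_exp x).hasDerivWithinAt)
    exp_injective.injOn g).symm

end ExpSubstitution

section

variable {α δ : ℝ}

lemma exp_smul_rpow_mul_exp_neg_mul (y : ℝ) :
    exp y • (exp y ^ (α - 1) * exp (-(δ * exp y))) = exp (α * y) * exp (-exp y * δ) := by
  rw [rpow_def_of_pos (exp_pos y), log_exp, smul_eq_mul, ← exp_add, ← exp_add, ← exp_add]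
  ring_nf

lemma integrable_exp_mul_mul_exp_neg_exp_mul (hα : 0 < α) (hδ : 0 < δ) :
    Integrable fun y => exp (α * y) * exp (-exp y * δ) := by
  have hg : IntegrableOn (fun t : ℝ => t ^ (α - 1) * exp (-(δ * t))) (Ioi 0) := by
    simpa [rpow_one] using
      integrableOn_rpow_mul_exp_neg_mul_rpow (by linarith : (-1 : ℝ) < α - 1) one_pos hδ
  simpa only [exp_smul_rpow_mul_exp_neg_mul] using (integrable_exp_smul_comp_exp_iff _).2 hg

lemma integral_exp_mul_mul_exp_neg_exp_mul (hα : 0 < α) (hδ : 0 < δ) :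
    ∫ y, exp (α * y) * exp (-exp y * δ) = (1 / δ) ^ α * Gamma α := by
  simpa only [exp_smul_rpow_mul_exp_neg_mul, integral_rpow_mul_exp_neg_mul_Ioi hα hδ] using
    integral_exp_smul_comp_exp fun t : ℝ => t ^ (α - 1) * exp (-(δ * t))

end

theorem summable_and_tsum_le_integral_of_le_intervalIntegral {f : ℝ → ℝ} {a : ℤ → ℝ}
    (hf : Integrable f) (ha₀ : ∀ n, 0 ≤ a n) (ha : ∀ n : ℤ, a n ≤ ∫ x in (n - 1 : ℝ)..n, f x) :
    Summable a ∧ ∑' n, a n ≤ ∫ x, f x := by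
  have hsum : HasSum (fun n : ℤ => ∫ x in (n - 1 : ℝ)..n, f x) (∫ x, f x) := by
    simpa only [neg_add_eq_sub, sub_add_cancel] using hf.hasSum_intervalIntegral (-1)
  have ha_sum : Summable a := hsum.summable.of_nonneg_of_le ha₀ ha
  exact ⟨ha_sum, hsum.tsum_eq ▸ ha_sum.tsum_le_tsum ha hsum.summable⟩

section

variable {α δ b : ℝ}

lemma rpow_mul_mul_exp_neg_rpow_mul_eq_exp (hb : 0 < b) (x : ℝ) :
    b ^ (α * x) * exp (-b ^ x * δ) = exp (α * (log b * x)) * exp (-exp (log b * x) * δ) := by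
  rw [rpow_def_of_pos hb, rpow_def_of_pos hb]
  ring_nf

lemma integrable_rpow_mul_mul_exp_neg_rpow_mul (hα : 0 < α) (hδ : 0 < δ) (hb : 1 < b) :
    Integrable fun x => b ^ (α * x) * exp (-b ^ x * δ) := by
  simpa only [← rpow_mul_mul_exp_neg_rpow_mul_eq_exp (zero_lt_one.trans hb)] using
    (integrable_exp_mul_mul_exp_neg_exp_mul hα hδ).comp_mul_left' (log_pos hb).ne'

lemma integral_rpow_mul_mul_exp_neg_rpow_mul (hα : 0 < α) (hδ : 0 < δ) (hb : 1 < b) :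
    ∫ x, b ^ (α * x) * exp (-b ^ x * δ) = (1 / δ) ^ α * Gamma α / log b := by
  simp_rw [rpow_mul_mul_exp_neg_rpow_mul_eq_exp (zero_lt_one.trans hb)]
  rw [Measure.integral_comp_mul_left (fun y => exp (α * y) * exp (-exp y * δ)),
    integral_exp_mul_mul_exp_neg_exp_mul hα hδ, abs_of_pos (inv_pos.2 (log_pos hb)),
    smul_eq_mul, inv_mul_eq_div]

lemma rpow_mul_mul_exp_neg_rpow_mul_le (hα : 0 ≤ α) (hδ : 0 ≤ δ) (hb : 1 ≤ b) {h x : ℝ}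
    (hx : x ∈ Icc (h - 1) h) :
    b ^ (α * h) * exp (-b ^ h * δ) ≤ b ^ α * (b ^ (α * x) * exp (-b ^ x * δ)) := by
  have hpow : b ^ (α * h) ≤ b ^ α * b ^ (α * x) := by
    rw [← rpow_add (zero_lt_one.trans_le hb)]
    exact rpow_le_rpow_of_exponent_le hb (by nlinarith [hx.1])
  have hexp : exp (-b ^ h * δ) ≤ exp (-b ^ x * δ) := by
    have := rpow_le_rpow_of_exponent_le hb hx.2
    gcongr
  calc b ^ (α * h) * exp (-b ^ h * δ) ≤ (b ^ α * b ^ (α * x)) * exp (-b ^ x * δ) := by gcongr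
    _ = _ := mul_assoc ..

lemma rpow_mul_mul_exp_neg_rpow_mul_le_intervalIntegral (hα : 0 < α) (hδ : 0 < δ) (hb : 1 < b)
    (n : ℤ) :
    b ^ (α * n) * exp (-b ^ (n : ℝ) * δ) ≤
      ∫ x in (n - 1 : ℝ)..n, b ^ α * (b ^ (α * x) * exp (-b ^ x * δ)) :=
  calc _ = ∫ _ in (n - 1 : ℝ)..n, b ^ (α * n) * exp (-b ^ (n : ℝ) * δ) := by simp
    _ ≤ _ := intervalIntegral.integral_mono_on (by linarith) intervalIntegrable_const
        ((integrable_rpow_mul_mul_exp_neg_rpow_mul hα hδ hb).const_mul _).intervalIntegrable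
        fun _ hx => rpow_mul_mul_exp_neg_rpow_mul_le hα.le hδ.le hb.le hx

theorem summable_and_tsum_rpow_mul_mul_exp_neg_rpow_mul_le (hα : 0 < α) (hδ : 0 < δ)
    (hb : 1 < b) :
    Summable (fun n : ℤ => b ^ (α * n) * exp (-b ^ (n : ℝ) * δ)) ∧
    ∑' n : ℤ, b ^ (α * n) * exp (-b ^ (n : ℝ) * δ) ≤ (b / δ) ^ α * Gamma α / log b := by
  have key := summable_and_tsum_le_integral_of_le_intervalIntegral
    ((integrable_rpow_mul_mul_exp_neg_rpow_mul hα hδ hb).const_mul (b ^ α))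
    (fun n => by positivity) (rpow_mul_mul_exp_neg_rpow_mul_le_intervalIntegral hα hδ hb)
  rw [integral_const_mul, integral_rpow_mul_mul_exp_neg_rpow_mul hα hδ hb] at key
  refine ⟨key.1, key.2.trans_eq ?_⟩
  rw [div_eq_mul_one_div b, mul_rpow (zero_lt_one.trans hb).le (by positivity)]
  ring

end

/-- For `α, δ > 0`, the two-sided sum `∑_{h ∈ ℤ} 2^{α h} e^{-2^h δ}` converges and is
bounded above by `(2/δ)^α Γ(α) / log 2`. -/
theorem sum_scale_bound (α δ : ℝ) (hα : 0 < α) (hδ : 0 < δ) :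
    Summable (fun h : ℤ => (2:ℝ) ^ (α * (h:ℝ)) * Real.exp (-(2:ℝ) ^ ((h:ℝ)) * δ)) ∧
    (∑' h : ℤ, (2:ℝ) ^ (α * (h:ℝ)) * Real.exp (-(2:ℝ) ^ ((h:ℝ)) * δ)) ≤
      (2 / δ) ^ α * Real.Gamma α / Real.log 2 :=
  summable_and_tsum_rpow_mul_mul_exp_neg_rpow_mul_le hα hδ one_lt_two
end

section
/- Let A, B be two antisymmetric 2n × 2n matrices over ℝ. Then Pf A − Pf B can be written as a telescoping sum over pairs (i,j) with 1 ≤ i < j ≤ 2n of terms, where each term is bounded in absolute value by |A_{i,j} − B_{i,j}| times the absolute value of the Pfaffian of a suitable antisymmetric (2n−2) × (2n−2) matrix obtained by deleting rows and columns i and j from a matrix whose entries above the diagonal agree with A for indices lexicographically before (i,j) and with B afterwards. In particular, |Pf A − Pf B| ≤ ∑_{i<j} |A_{i,j} − B_{i,j}| · |Pf(M^{(i,j)}_{ĵî})| for the interpolating matrices M^{(i,j)}. -/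
open Matrix

/-- The Pfaffian of a `2n × 2n` real matrix. -/
noncomputable def pfaffian {n : ℕ} (A : Matrix (Fin (2 * n)) (Fin (2 * n)) ℝ) : ℝ :=
  (1 / (2 ^ n * (n.factorial : ℝ))) *
    ∑ π : Equiv.Perm (Fin (2 * n)),
      ((Equiv.Perm.sign π : ℤ) : ℝ) *
        ∏ i : Fin n,
          A (π ⟨2 * (i : ℕ), by have := i.isLt; omega⟩)
            (π ⟨2 * (i : ℕ) + 1, by have := i.isLt; omega⟩)

/-- The interpolating antisymmetric matrix `M^{(i,j)}`: its above-diagonal entries with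
index lexicographically `≤ (i,j)` agree with `A`, the remaining above-diagonal entries
agree with `B`, and it is antisymmetric with zero diagonal. -/
def interp {m : ℕ} (A B : Matrix (Fin m) (Fin m) ℝ) (i j : Fin m) :
    Matrix (Fin m) (Fin m) ℝ := fun k l =>
  if k < l then (if k < i ∨ (k = i ∧ l ≤ j) then A k l else B k l)
  else if l < k then -(if l < i ∨ (l = i ∧ k ≤ j) then A l k else B l k)
  else 0

theorem card_pair_compl {n : ℕ} {i j : Fin (2 * (n + 1))} (h : i ≠ j) :
    ({i, j}ᶜ : Finset (Fin (2 * (n + 1)))).card = 2 * n := by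
  rw [Finset.card_compl, Finset.card_insert_of_notMem (by simpa using h),
    Finset.card_singleton]
  simp only [Fintype.card_fin]
  omega

/-- The Pfaffian of the `(2n-2) × (2n-2)` matrix obtained from a `2n × 2n` matrix by
deleting rows and columns `i` and `j`. -/
noncomputable def pfMinor {n : ℕ}
    (M : Matrix (Fin (2 * (n + 1))) (Fin (2 * (n + 1))) ℝ)
    (i j : Fin (2 * (n + 1))) (h : i ≠ j) : ℝ :=
  pfaffian (Matrix.of fun a b : Fin (2 * n) =>
    M (({i, j}ᶜ : Finset (Fin (2 * (n + 1)))).orderEmbOfFin (card_pair_compl h) a)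
      (({i, j}ᶜ : Finset (Fin (2 * (n + 1)))).orderEmbOfFin (card_pair_compl h) b))

/-!
In `Pf M = c ∑_π sgn π ∏_l M_{π(2l), π(2l+1)}` each term contains at most one of the entries
`M_{ij}`, `M_{ji}`, so setting `M_{ij} = x = -M_{ji}` makes `Pf M` affine in `x`. Conjugating by
a permutation `ρ` that moves `(i, j)` to the last pair changes `Pf` only by `sgn ρ`; there the
slope is read off by grouping the terms according to the pair `l₀` that carries `x` and its
orientation: relabelling the pairs (an even permutation) and fixing the orientation reduces all
`2(n+1)` groups to the Pfaffian sum of the leading `2n × 2n` block, which is `Pf M_{îĵ}`.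
Hence `|Pf (M with x) - Pf (M with y)| = |x - y| · |Pf M_{îĵ}|`. Changing the entries above the
diagonal from those of `B` to those of `A` one at a time in lexicographic order passes through
the matrices `M^{(i,j)}`, and the triangle inequality along this telescoping sum gives the bound.
-/

open Equiv Finset

namespace Finset

theorem prod_add_eq_add_sum_mul_prod_erase {ι R : Type*} [CommSemiring R] [DecidableEq ι]
    (s : Finset ι) (f g : ι → R) (hg : ∀ l ∈ s, ∀ l' ∈ s, l ≠ l' → g l * g l' = 0) :
    ∏ l ∈ s, (f l + g l) =
      ∏ l ∈ s, f l + ∑ l ∈ s, g l * ∏ l' ∈ s.erase l, f l' := by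
  induction s using Finset.induction_on with
  | empty => simp
  | insert a s ha ih =>
    have hs : ∀ l ∈ s, ∀ l' ∈ s, l ≠ l' → g l * g l' = 0 := fun l hl l' hl' =>
      hg l (mem_insert_of_mem hl) l' (mem_insert_of_mem hl')
    have hga : g a * ∑ l ∈ s, g l * ∏ l' ∈ s.erase l, f l' = 0 := by
      rw [mul_sum]
      exact sum_eq_zero fun l hl => by
        rw [← mul_assoc, hg a (mem_insert_self a s) l (mem_insert_of_mem hl) (by grind), zero_mul]
    have herase : ∀ l ∈ s,
        ∏ l' ∈ (insert a s).erase l, f l' = f a * ∏ l' ∈ s.erase l, f l' := fun l hl => by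
        rw [erase_insert_of_ne (by grind), prod_insert (fun h => ha (mem_of_mem_erase h))]
    have hsum : ∑ l ∈ s, g l * ∏ l' ∈ (insert a s).erase l, f l' =
        f a * ∑ l ∈ s, g l * ∏ l' ∈ s.erase l, f l' := by
      rw [mul_sum]
      exact sum_congr rfl fun l hl => by rw [herase l hl]; ring
    rw [prod_insert ha, prod_insert ha, ih hs, sum_insert ha, erase_insert ha, hsum, add_mul,
      mul_add, mul_add, hga]
    ring

theorem sum_range_mul_eq_sum_sum {M : Type*} [AddCommMonoid M] (f : ℕ → M) (m k : ℕ) :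
    ∑ t ∈ range (m * k), f t = ∑ i : Fin m, ∑ j : Fin k, f (j + k * i) := by
  rw [← Fin.sum_univ_eq_sum_range, ← finProdFinEquiv.sum_comp, Fintype.sum_prod_type]
  simp only [finProdFinEquiv_apply_val]

end Finset

lemma add_mul_lt_add_mul_iff_lex {m k l i j : ℕ} (hl : l < m) (hj : j ≤ m) :
    l + m * k < j + m * i ↔ k < i ∨ (k = i ∧ l < j) := by
  constructor
  · intro h
    by_contra! hc
    rcases hc.1.lt_or_eq with hik | rfl
    · have : m * (i + 1) ≤ m * k := Nat.mul_le_mul_left m hik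
      nlinarith
    · exact absurd (hc.2 rfl) (by omega)
  · rintro (hki | ⟨rfl, hlj⟩)
    · have : m * (k + 1) ≤ m * i := Nat.mul_le_mul_left m hki
      nlinarith
    · omega

namespace Matrix

variable {ι ι' R : Type*} [DecidableEq ι]

def skewUpdate [Neg R] (M : Matrix ι ι R) (a b : ι) (x : R) : Matrix ι ι R := fun k l =>
  if k = a ∧ l = b then x else if k = b ∧ l = a then -x else M k l

lemma skewUpdate_apply_of_ne [Neg R] (M : Matrix ι ι R) {a b k : ι} (ha : k ≠ a) (hb : k ≠ b)
    (l : ι) (x : R) : skewUpdate M a b x k l = M k l := by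
  simp [skewUpdate, ha, hb]

lemma skewUpdate_submatrix [Neg R] [DecidableEq ι'] (M : Matrix ι ι R) (a b : ι) (x : R)
    (e : ι' ≃ ι) :
    (skewUpdate M a b x).submatrix e e = skewUpdate (M.submatrix e e) (e.symm a) (e.symm b) x := by
  ext k l
  simp [skewUpdate, Equiv.eq_symm_apply]

lemma eq_skewUpdate [Neg R] {M N : Matrix ι ι R} {a b : ι}
    (h : ∀ k l, ¬(k = a ∧ l = b) → ¬(k = b ∧ l = a) → N k l = M k l)
    (hN : N b a = -N a b) :
    N = skewUpdate M a b (N a b) := by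
  ext k l
  unfold skewUpdate
  split_ifs with h₁ h₂
  · rw [h₁.1, h₁.2]
  · rw [h₂.1, h₂.2, hN]
  · exact h k l h₁ h₂

lemma skewUpdate_apply_eq_add [CommRing R] (M : Matrix ι ι R) (a b k l : ι) (x : R) :
    skewUpdate M a b x k l = skewUpdate M a b 0 k l +
      x * (skewUpdate M a b 1 k l - skewUpdate M a b 0 k l) := by
  unfold skewUpdate
  split_ifs <;> ring

lemma skewUpdate_one_sub_zero_apply [CommRing R] (M : Matrix ι ι R) {a b : ι} (hab : a ≠ b)
    (k l : ι) :
    skewUpdate M a b 1 k l - skewUpdate M a b 0 k l =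
      (if k = a ∧ l = b then 1 else 0) - (if k = b ∧ l = a then 1 else 0) := by
  unfold skewUpdate
  grind

end Matrix

section Pairs

variable {k : ℕ}

def pairFst (l : Fin k) : Fin (2 * k) := ⟨2 * l, by omega⟩

def pairSnd (l : Fin k) : Fin (2 * k) := ⟨2 * l + 1, by omega⟩

lemma pairFst_injective : Function.Injective (pairFst (k := k)) := fun l l' h => by
  simp only [pairFst, Fin.mk.injEq] at h
  omega

lemma pairSnd_injective : Function.Injective (pairSnd (k := k)) := fun l l' h => by
  simp only [pairSnd, Fin.mk.injEq] at h
  omega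

lemma pairFst_ne_pairSnd (l l' : Fin k) : pairFst l ≠ pairSnd l' := by
  simp only [pairFst, pairSnd, ne_eq, Fin.mk.injEq]
  omega

def pairSwap (l₀ l₁ : Fin k) : Perm (Fin (2 * k)) :=
  swap (pairFst l₀) (pairFst l₁) * swap (pairSnd l₀) (pairSnd l₁)

lemma pairSwap_apply_pairFst (l₀ l₁ l : Fin k) :
    pairSwap l₀ l₁ (pairFst l) = pairFst (swap l₀ l₁ l) := by
  rw [pairSwap, Perm.mul_apply, swap_apply_of_ne_of_ne (pairFst_ne_pairSnd _ _)
    (pairFst_ne_pairSnd _ _), pairFst_injective.swap_apply]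

lemma pairSwap_apply_pairSnd (l₀ l₁ l : Fin k) :
    pairSwap l₀ l₁ (pairSnd l) = pairSnd (swap l₀ l₁ l) := by
  rw [pairSwap, Perm.mul_apply, pairSnd_injective.swap_apply,
    swap_apply_of_ne_of_ne (pairFst_ne_pairSnd _ _).symm (pairFst_ne_pairSnd _ _).symm]

lemma sign_pairSwap (l₀ l₁ : Fin k) : Perm.sign (pairSwap l₀ l₁) = 1 := by
  rcases eq_or_ne l₀ l₁ with rfl | h
  · simp [pairSwap]
  · rw [pairSwap, map_mul, Perm.sign_swap (pairFst_injective.ne h),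
      Perm.sign_swap (pairSnd_injective.ne h)]
    rfl

end Pairs

section PfaffianSum

variable {k : ℕ}

def pfaffianSum (M : Matrix (Fin (2 * k)) (Fin (2 * k)) ℝ) : ℝ :=
  ∑ π : Perm (Fin (2 * k)),
    ((Perm.sign π : ℤ) : ℝ) * ∏ l : Fin k, M (π (pairFst l)) (π (pairSnd l))

lemma pfaffian_eq_pfaffianSum (M : Matrix (Fin (2 * k)) (Fin (2 * k)) ℝ) :
    pfaffian M = 1 / (2 ^ k * (k.factorial : ℝ)) * pfaffianSum M :=
  rfl

lemma abs_intCast_sign {α : Type*} [DecidableEq α] [Fintype α] (σ : Perm α) :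
    |((Perm.sign σ : ℤ) : ℝ)| = 1 := by
  rcases Int.units_eq_one_or (Perm.sign σ) with h | h <;> simp [h]

lemma intCast_sign_mul_self {α : Type*} [DecidableEq α] [Fintype α] (σ : Perm α) :
    ((Perm.sign σ : ℤ) : ℝ) * ((Perm.sign σ : ℤ) : ℝ) = 1 := by
  rcases Int.units_eq_one_or (Perm.sign σ) with h | h <;> simp [h]

lemma pfaffianSum_submatrix (M : Matrix (Fin (2 * k)) (Fin (2 * k)) ℝ)
    (σ : Perm (Fin (2 * k))) :
    pfaffianSum (M.submatrix σ σ) = Perm.sign σ * pfaffianSum M := by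
  rw [pfaffianSum, pfaffianSum, mul_sum]
  refine Fintype.sum_equiv (Equiv.mulLeft σ) _ _ fun π => ?_
  simp only [Matrix.submatrix_apply, coe_mulLeft, Perm.mul_apply, Perm.sign_mul,
    Units.val_mul, Int.cast_mul, ← mul_assoc, intCast_sign_mul_self, one_mul]

lemma pfaffian_submatrix (M : Matrix (Fin (2 * k)) (Fin (2 * k)) ℝ)
    (σ : Perm (Fin (2 * k))) :
    pfaffian (M.submatrix σ σ) = Perm.sign σ * pfaffian M := by
  rw [pfaffian_eq_pfaffianSum, pfaffian_eq_pfaffianSum, pfaffianSum_submatrix]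
  ring

lemma pfaffian_eq_sign_mul_pfaffian_submatrix (M : Matrix (Fin (2 * k)) (Fin (2 * k)) ℝ)
    (σ : Perm (Fin (2 * k))) :
    pfaffian M = Perm.sign σ * pfaffian (M.submatrix σ σ) := by
  rw [pfaffian_submatrix, ← mul_assoc, intCast_sign_mul_self, one_mul]

lemma sum_sign_mul_pair_mul_prod_erase_eq (F G : Fin (2 * k) → Fin (2 * k) → ℝ)
    (l₀ l₁ : Fin k) :
    ∑ π : Perm (Fin (2 * k)), ((Perm.sign π : ℤ) : ℝ) *
        (G (π (pairFst l₀)) (π (pairSnd l₀)) *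
          ∏ l ∈ univ.erase l₀, F (π (pairFst l)) (π (pairSnd l))) =
      ∑ π : Perm (Fin (2 * k)), ((Perm.sign π : ℤ) : ℝ) *
        (G (π (pairFst l₁)) (π (pairSnd l₁)) *
          ∏ l ∈ univ.erase l₁, F (π (pairFst l)) (π (pairSnd l))) := by
  refine Fintype.sum_equiv (Equiv.mulRight (pairSwap l₀ l₁)) _ _ fun π => ?_
  have hprod : ∏ l ∈ univ.erase l₀, F (π (pairFst l)) (π (pairSnd l)) =
      ∏ l ∈ univ.erase l₁, F ((π * pairSwap l₀ l₁) (pairFst l))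
        ((π * pairSwap l₀ l₁) (pairSnd l)) := by
    refine prod_equiv (swap l₀ l₁) (fun l => ?_) fun l _ => ?_
    · simp [swap_apply_eq_iff]
    · simp only [Perm.mul_apply, pairSwap_apply_pairFst, pairSwap_apply_pairSnd,
        swap_apply_self]
  simp only [coe_mulRight, Perm.sign_mul, sign_pairSwap, mul_one, hprod, Perm.mul_apply,
    pairSwap_apply_pairFst, pairSwap_apply_pairSnd, swap_apply_right]

lemma prod_skewUpdate_eq_add (M : Matrix (Fin (2 * k)) (Fin (2 * k)) ℝ) {a b : Fin (2 * k)}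
    (hab : a ≠ b) (π : Perm (Fin (2 * k))) (x : ℝ) :
    ∏ l, skewUpdate M a b x (π (pairFst l)) (π (pairSnd l)) =
      ∏ l, skewUpdate M a b 0 (π (pairFst l)) (π (pairSnd l)) +
        x * ∑ l₀, (skewUpdate M a b 1 - skewUpdate M a b 0)
          (π (pairFst l₀)) (π (pairSnd l₀)) *
            ∏ l ∈ univ.erase l₀, skewUpdate M a b 0 (π (pairFst l)) (π (pairSnd l)) := by
  simp_rw [skewUpdate_apply_eq_add M a b _ _ x]
  rw [prod_add_eq_add_sum_mul_prod_erase, mul_sum]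
  · simp only [Matrix.sub_apply, mul_assoc]
  -- `(a, b)` or `(b, a)` is hit by at most one of the pairs `(π (2l), π (2l+1))`
  intro l _ l' _ hll'
  simp only [skewUpdate_one_sub_zero_apply M hab]
  have h1 := π.injective.ne (pairFst_injective.ne hll')
  have h2 := π.injective.ne (pairFst_ne_pairSnd l l')
  have h3 := π.injective.ne (pairFst_ne_pairSnd l' l)
  have h4 := π.injective.ne (pairSnd_injective.ne hll')
  grind

lemma pfaffianSum_skewUpdate_eq_add (M : Matrix (Fin (2 * k)) (Fin (2 * k)) ℝ) {a b : Fin (2 * k)}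
    (hab : a ≠ b) (x : ℝ) :
    pfaffianSum (skewUpdate M a b x) = pfaffianSum (skewUpdate M a b 0) +
      x * ∑ l₀, ∑ π : Perm (Fin (2 * k)), ((Perm.sign π : ℤ) : ℝ) *
        ((skewUpdate M a b 1 - skewUpdate M a b 0) (π (pairFst l₀)) (π (pairSnd l₀)) *
          ∏ l ∈ univ.erase l₀, skewUpdate M a b 0 (π (pairFst l)) (π (pairSnd l))) := by
  simp only [pfaffianSum, prod_skewUpdate_eq_add M hab _ x, mul_add, sum_add_distrib, mul_sum]
  rw [sum_comm]
  simp only [mul_left_comm x]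

end PfaffianSum

section LastPair

variable {n : ℕ}

def pairCastSucc : Fin (2 * n) → Fin (2 * (n + 1)) :=
  Fin.castLE (Nat.mul_le_mul_left 2 (Nat.le_add_right n 1))

lemma pairCastSucc_ne_pairFst_last (y : Fin (2 * n)) : pairCastSucc y ≠ pairFst (Fin.last n) :=
  Fin.ne_of_val_ne (by simp [pairCastSucc, pairFst]; omega)

lemma pairCastSucc_ne_pairSnd_last (y : Fin (2 * n)) : pairCastSucc y ≠ pairSnd (Fin.last n) :=
  Fin.ne_of_val_ne (by simp [pairCastSucc, pairSnd]; omega)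

lemma prod_univ_erase_last {M : Type*} [CommMonoid M] (f : Fin (n + 1) → M) :
    ∏ l ∈ univ.erase (Fin.last n), f l = ∏ l : Fin n, f l.castSucc := by
  rw [← compl_singleton, ← Fin.image_castSucc,
    prod_image fun _ _ _ _ h => Fin.castSucc_injective _ h]

lemma fixes_ge_iff_fixes_lastPair (π : Perm (Fin (2 * (n + 1)))) :
    (∀ x : Fin (2 * (n + 1)), ¬(x : ℕ) < 2 * n → π x = x) ↔
      π (pairFst (Fin.last n)) = pairFst (Fin.last n) ∧
        π (pairSnd (Fin.last n)) = pairSnd (Fin.last n) := by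
  refine ⟨fun h => ⟨h _ (by simp [pairFst]), h _ (by simp [pairSnd])⟩, fun h x hx => ?_⟩
  obtain hx | hx : x = pairFst (Fin.last n) ∨ x = pairSnd (Fin.last n) := by
    simp only [Fin.ext_iff, pairFst, pairSnd, Fin.val_last]
    omega
  · exact hx ▸ h.1
  · exact hx ▸ h.2

lemma sum_ite_fixes_eq_sum_perm (F : Fin (2 * (n + 1)) → Fin (2 * (n + 1)) → ℝ) :
    ∑ π : Perm (Fin (2 * (n + 1))),
      (if ∀ x : Fin (2 * (n + 1)), ¬(x : ℕ) < 2 * n → π x = x then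
        ((Perm.sign π : ℤ) : ℝ) *
          ∏ l : Fin n, F (π (pairFst l.castSucc)) (π (pairSnd l.castSucc))
      else 0) =
      ∑ τ : Perm (Fin (2 * n)), ((Perm.sign τ : ℤ) : ℝ) *
        ∏ l : Fin n, F (pairCastSucc (τ (pairFst l))) (pairCastSucc (τ (pairSnd l))) := by
  set h := Nat.mul_le_mul_left 2 (Nat.le_add_right n 1)
  let p : Fin (2 * (n + 1)) → Prop := fun x => (x : ℕ) < 2 * n
  rw [← sum_filter,
    sum_subtype (p := fun π : Perm _ => ∀ x, ¬p x → π x = x) _ (by simp [p])]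
  refine (Fintype.sum_equiv
    ((Equiv.permCongr (Fin.castLEquiv h)).trans (Perm.subtypeEquivSubtypePerm p)) _ _
    fun τ => ?_).symm
  have happly : ∀ y, Perm.ofSubtype ((Fin.castLEquiv h).permCongr τ) (Fin.castLE h y) =
      Fin.castLE h (τ y) := fun y => by
    rw [Perm.ofSubtype_apply_of_mem _ (show p (Fin.castLE h y) from y.isLt), Equiv.permCongr_apply]
    rfl
  simp only [Equiv.trans_apply, Perm.subtypeEquivSubtypePerm_apply_coe, Perm.sign_ofSubtype,
    Perm.sign_permCongr]
  congr 1
  refine prod_congr rfl fun l _ => ?_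
  exact (congrArg₂ F (happly _) (happly _)).symm

lemma sum_sign_mul_skewUpdate_lastPair (M : Matrix (Fin (2 * (n + 1))) (Fin (2 * (n + 1))) ℝ) :
    ∑ π : Perm (Fin (2 * (n + 1))), ((Perm.sign π : ℤ) : ℝ) *
      ((skewUpdate M (pairFst (Fin.last n)) (pairSnd (Fin.last n)) 1 -
          skewUpdate M (pairFst (Fin.last n)) (pairSnd (Fin.last n)) 0)
          (π (pairFst (Fin.last n))) (π (pairSnd (Fin.last n))) *
        ∏ l ∈ univ.erase (Fin.last n),
          skewUpdate M (pairFst (Fin.last n)) (pairSnd (Fin.last n)) 0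
            (π (pairFst l)) (π (pairSnd l))) =
      2 * pfaffianSum (M.submatrix pairCastSucc pairCastSucc) := by
  set a := pairFst (Fin.last n)
  set b := pairSnd (Fin.last n)
  set N := skewUpdate M a b 0
  have hab : a ≠ b := pairFst_ne_pairSnd _ _
  set R : Perm (Fin (2 * (n + 1))) → ℝ :=
    fun π => ∏ l : Fin n, N (π (pairFst l.castSucc)) (π (pairSnd l.castSucc))
  set Φ : Perm (Fin (2 * (n + 1))) → ℝ := fun π =>
    if ∀ x : Fin (2 * (n + 1)), ¬(x : ℕ) < 2 * n → π x = x then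
      ((Perm.sign π : ℤ) : ℝ) * R π else 0
  have hR : ∀ π, R (π * swap a b) = R π := fun π => by
    refine prod_congr rfl fun l _ => ?_
    have hne : l.castSucc ≠ Fin.last n := Fin.castSucc_ne_last l
    rw [Perm.mul_apply, Perm.mul_apply,
      swap_apply_of_ne_of_ne (pairFst_injective.ne hne) (pairFst_ne_pairSnd _ _),
      swap_apply_of_ne_of_ne (pairFst_ne_pairSnd _ _).symm (pairSnd_injective.ne hne)]
  have hfix : ∀ π : Perm (Fin (2 * (n + 1))),
      (∀ x : Fin (2 * (n + 1)), ¬(x : ℕ) < 2 * n → π x = x) ↔ π a = a ∧ π b = b :=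
    fixes_ge_iff_fixes_lastPair
  have hterm : ∀ π : Perm (Fin (2 * (n + 1))), ((Perm.sign π : ℤ) : ℝ) *
      ((skewUpdate M a b 1 - N) (π a) (π b) * ∏ l ∈ univ.erase (Fin.last n),
        N (π (pairFst l)) (π (pairSnd l))) = Φ π + Φ (π * swap a b) := fun π => by
    rw [prod_univ_erase_last, Matrix.sub_apply, skewUpdate_one_sub_zero_apply M hab]
    change _ * (_ * R π) = _
    simp only [Φ, hfix, hR, Perm.mul_apply, swap_apply_left, swap_apply_right,
      and_comm (a := π b = a), Perm.sign_mul, Perm.sign_swap hab, mul_neg, mul_one,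
      Units.val_neg, Int.cast_neg]
    split_ifs <;> ring
  have hswap : ∑ π, Φ (π * swap a b) = ∑ π, Φ π :=
    Fintype.sum_equiv (Equiv.mulRight (swap a b)) _ _ fun _ => rfl
  have hΦ : ∑ π, Φ π = pfaffianSum (M.submatrix pairCastSucc pairCastSucc) := by
    refine (sum_ite_fixes_eq_sum_perm N).trans (sum_congr rfl fun τ _ => ?_)
    congr 1
    exact prod_congr rfl fun l _ => skewUpdate_apply_of_ne M (pairCastSucc_ne_pairFst_last _)
      (pairCastSucc_ne_pairSnd_last _) _ _
  rw [sum_congr rfl fun π _ => hterm π, sum_add_distrib, hswap, hΦ]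
  ring

theorem pfaffian_skewUpdate_lastPair (M : Matrix (Fin (2 * (n + 1))) (Fin (2 * (n + 1))) ℝ)
    (x : ℝ) :
    pfaffian (skewUpdate M (pairFst (Fin.last n)) (pairSnd (Fin.last n)) x) =
      pfaffian (skewUpdate M (pairFst (Fin.last n)) (pairSnd (Fin.last n)) 0) +
        x * pfaffian (M.submatrix pairCastSucc pairCastSucc) := by
  rw [pfaffian_eq_pfaffianSum, pfaffian_eq_pfaffianSum, pfaffian_eq_pfaffianSum,
    pfaffianSum_skewUpdate_eq_add M (pairFst_ne_pairSnd _ _) x,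
    sum_congr rfl fun l₀ _ => (sum_sign_mul_pair_mul_prod_erase_eq _ _ l₀ (Fin.last n)).trans
      (sum_sign_mul_skewUpdate_lastPair M),
    sum_const, card_univ, Fintype.card_fin, nsmul_eq_mul, Nat.factorial_succ]
  push_cast
  field_simp
  ring

end LastPair

section Minor

variable {n : ℕ} {i j : Fin (2 * (n + 1))}

noncomputable def lastPairPerm (h : i ≠ j) : Perm (Fin (2 * (n + 1))) :=
  Equiv.ofBijective
    (Fin.append (m := 2 * n) (({i, j}ᶜ : Finset _).orderEmbOfFin (card_pair_compl h)) ![i, j])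
    (Finite.injective_iff_bijective.mp <| Fin.append_injective_iff.mpr
      ⟨(Finset.orderEmbOfFin _ _).injective, by
        intro a c
        fin_cases a <;> fin_cases c <;> simp [h, h.symm], by
        intro a c
        have := ({i, j}ᶜ : Finset _).orderEmbOfFin_mem (card_pair_compl h) a
        simp only [mem_compl, mem_insert, mem_singleton, not_or] at this
        fin_cases c
        exacts [this.1, this.2]⟩)

lemma lastPairPerm_apply_pairCastSucc (h : i ≠ j) (y : Fin (2 * n)) :
    lastPairPerm h (pairCastSucc y) = ({i, j}ᶜ : Finset _).orderEmbOfFin (card_pair_compl h) y :=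
  Fin.append_left _ _ y

lemma lastPairPerm_apply_pairFst_last (h : i ≠ j) : lastPairPerm h (pairFst (Fin.last n)) = i :=
  Fin.append_right (m := 2 * n) _ ![i, j] 0

lemma lastPairPerm_apply_pairSnd_last (h : i ≠ j) : lastPairPerm h (pairSnd (Fin.last n)) = j :=
  Fin.append_right (m := 2 * n) _ ![i, j] 1

lemma pfMinor_eq_pfaffian_submatrix (M : Matrix (Fin (2 * (n + 1))) (Fin (2 * (n + 1))) ℝ)
    (h : i ≠ j) :
    pfMinor M i j h = pfaffian (((M.submatrix (lastPairPerm h) (lastPairPerm h))).submatrix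
      pairCastSucc pairCastSucc) := by
  unfold pfMinor
  congr 1
  ext a b
  simp [lastPairPerm_apply_pairCastSucc]

theorem pfaffian_skewUpdate_sub_skewUpdate (M : Matrix (Fin (2 * (n + 1))) (Fin (2 * (n + 1))) ℝ)
    (h : i ≠ j) (x y : ℝ) :
    pfaffian (skewUpdate M i j x) - pfaffian (skewUpdate M i j y) =
      Perm.sign (lastPairPerm h) * ((x - y) * pfMinor M i j h) := by
  have hi : (lastPairPerm h).symm i = pairFst (Fin.last n) :=
    (Equiv.symm_apply_eq _).mpr (lastPairPerm_apply_pairFst_last h).symm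
  have hj : (lastPairPerm h).symm j = pairSnd (Fin.last n) :=
    (Equiv.symm_apply_eq _).mpr (lastPairPerm_apply_pairSnd_last h).symm
  have key : ∀ z, pfaffian (skewUpdate M i j z) = Perm.sign (lastPairPerm h) *
      (pfaffian (skewUpdate (M.submatrix (lastPairPerm h) (lastPairPerm h))
        (pairFst (Fin.last n)) (pairSnd (Fin.last n)) 0) + z * pfMinor M i j h) := fun z => by
    rw [pfaffian_eq_sign_mul_pfaffian_submatrix _ (lastPairPerm h), skewUpdate_submatrix, hi, hj,
      pfaffian_skewUpdate_lastPair, pfMinor_eq_pfaffian_submatrix]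
  rw [key, key]
  ring

theorem abs_pfaffian_skewUpdate_sub_skewUpdate
    (M : Matrix (Fin (2 * (n + 1))) (Fin (2 * (n + 1))) ℝ) (h : i ≠ j) (x y : ℝ) :
    |pfaffian (skewUpdate M i j x) - pfaffian (skewUpdate M i j y)| =
      |x - y| * |pfMinor M i j h| := by
  rw [pfaffian_skewUpdate_sub_skewUpdate, abs_mul, abs_mul, abs_intCast_sign, one_mul]

end Minor

section SkewMix

variable {ι : Type*} [LinearOrder ι]

def skewMix (P : ι → ι → Prop) [DecidableRel P] (A B : Matrix ι ι ℝ) : Matrix ι ι ℝ :=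
  fun k l =>
    if k < l then (if P k l then A k l else B k l)
    else if l < k then -(if P l k then A l k else B l k)
    else 0

variable {P Q : ι → ι → Prop} [DecidableRel P] [DecidableRel Q] {A B C : Matrix ι ι ℝ}

lemma skewMix_apply_of_lt {k l : ι} (hkl : k < l) :
    skewMix P A B k l = if P k l then A k l else B k l := by
  simp [skewMix, hkl]

lemma skewMix_apply_comm (k l : ι) : skewMix P A B l k = -skewMix P A B k l := by
  rcases lt_trichotomy k l with hkl | rfl | hlk
  · simp [skewMix, hkl, hkl.not_gt]
  · simp [skewMix]
  · simp [skewMix, hlk, hlk.not_gt]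

lemma skewMix_apply_congr {k l : ι} (h : k < l → (P k l ↔ Q k l))
    (h' : l < k → (P l k ↔ Q l k)) : skewMix P A B k l = skewMix Q A B k l := by
  rcases lt_trichotomy k l with hkl | rfl | hlk
  · simp [skewMix, hkl, h hkl]
  · simp [skewMix]
  · simp [skewMix, hlk, hlk.not_gt, h' hlk]

lemma skewMix_congr (h : ∀ k l, k < l → (P k l ↔ Q k l)) : skewMix P A B = skewMix Q A B := by
  ext k l
  exact skewMix_apply_congr (h k l) (h l k)

lemma skewMix_eq_of_forall_lt (hC : Cᵀ = -C) (h : ∀ k l, k < l → skewMix P A B k l = C k l) :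
    skewMix P A B = C := by
  have hskew : ∀ k l, C l k = -C k l := fun k l => congrFun (congrFun hC k) l
  ext k l
  rcases lt_trichotomy k l with hkl | rfl | hlk
  · exact h k l hkl
  · have := hskew k k
    simp only [skewMix, lt_self_iff_false, if_false]
    linarith
  · rw [skewMix_apply_comm, h l k hlk, hskew, neg_neg]

end SkewMix

section LexInterp

variable {m : ℕ} {A B : Matrix (Fin m) (Fin m) ℝ}

-- `l + m * k` is the rank of the entry `(k, l)` in the lexicographic order.
def lexInterp (A B : Matrix (Fin m) (Fin m) ℝ) (t : ℕ) : Matrix (Fin m) (Fin m) ℝ :=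
  skewMix (fun k l => (l : ℕ) + m * k < t) A B

lemma interp_eq_skewMix (i j : Fin m) :
    interp A B i j = skewMix (fun k l => k < i ∨ (k = i ∧ l ≤ j)) A B :=
  rfl

lemma lexInterp_zero (hB : Bᵀ = -B) : lexInterp A B 0 = B :=
  skewMix_eq_of_forall_lt hB fun k l hkl => by simp [skewMix_apply_of_lt hkl]

lemma lexInterp_mul_self (hA : Aᵀ = -A) : lexInterp A B (m * m) = A :=
  skewMix_eq_of_forall_lt hA fun k l hkl => by
    rw [skewMix_apply_of_lt hkl, if_pos]
    simpa using (add_mul_lt_add_mul_iff_lex (i := m) l.isLt (Nat.zero_le m)).mpr (Or.inl k.isLt)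

lemma interp_eq_lexInterp (i j : Fin m) : interp A B i j = lexInterp A B (j + m * i + 1) := by
  refine (interp_eq_skewMix i j).trans (skewMix_congr fun k l _ => ?_)
  rw [add_right_comm, add_mul_lt_add_mul_iff_lex l.isLt (by omega), Fin.lt_def, Fin.ext_iff,
    Fin.le_def, Nat.lt_succ_iff]

lemma lexInterp_succ_of_not_lt {i j : Fin m} (h : ¬i < j) :
    lexInterp A B (j + m * i + 1) = lexInterp A B (j + m * i) := by
  refine skewMix_congr fun k l hkl => ?_
  rw [add_right_comm, add_mul_lt_add_mul_iff_lex l.isLt (by omega),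
    add_mul_lt_add_mul_iff_lex l.isLt j.isLt.le]
  rw [Fin.lt_def] at h hkl
  omega

lemma skewUpdate_interp_self {i j : Fin m} (h : i < j) :
    skewUpdate (interp A B i j) i j (A i j) = interp A B i j := by
  have hij : interp A B i j i j = A i j := by
    rw [interp_eq_skewMix, skewMix_apply_of_lt h, if_pos (Or.inr ⟨rfl, le_rfl⟩)]
  rw [← hij]
  exact (eq_skewUpdate (fun _ _ _ _ => rfl) (skewMix_apply_comm _ _)).symm

lemma lexInterp_eq_skewUpdate {i j : Fin m} (h : i < j) :
    lexInterp A B (j + m * i) = skewUpdate (interp A B i j) i j (B i j) := by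
  have hij : lexInterp A B (j + m * i) i j = B i j := by
    rw [lexInterp, skewMix_apply_of_lt h, if_neg (lt_irrefl _)]
  have hlex : ∀ k l : Fin m, ¬(k = i ∧ l = j) →
      ((l : ℕ) + m * k < j + m * i ↔ (l : ℕ) + m * k < j + m * i + 1) := fun k l hkl => by
    rw [add_right_comm, add_mul_lt_add_mul_iff_lex l.isLt j.isLt.le,
      add_mul_lt_add_mul_iff_lex l.isLt (by omega)]
    rw [Fin.ext_iff, Fin.ext_iff] at hkl
    omega
  rw [← hij, interp_eq_lexInterp]
  exact eq_skewUpdate (fun k l h₁ h₂ => skewMix_apply_congr (fun _ => hlex k l h₁)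
    (fun _ => hlex l k fun h => h₂ ⟨h.2, h.1⟩)) (skewMix_apply_comm _ _)

end LexInterp

theorem abs_pfaffian_lexInterp_succ_sub {n : ℕ}
    {A B : Matrix (Fin (2 * (n + 1))) (Fin (2 * (n + 1))) ℝ} (i j : Fin (2 * (n + 1))) :
    |pfaffian (lexInterp A B (j + 2 * (n + 1) * i + 1)) -
        pfaffian (lexInterp A B (j + 2 * (n + 1) * i))| =
      if h : i < j then |A i j - B i j| * |pfMinor (interp A B i j) i j h.ne| else 0 := by
  split_ifs with h
  · have key := abs_pfaffian_skewUpdate_sub_skewUpdate (interp A B i j) h.ne (A i j) (B i j)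
    rw [← interp_eq_lexInterp]
    rwa [skewUpdate_interp_self h, ← lexInterp_eq_skewUpdate h] at key
  · rw [lexInterp_succ_of_not_lt h, sub_self, abs_zero]

/-- Telescoping bound for a difference of Pfaffians: for antisymmetric `A`, `B`,
`|Pf A − Pf B| ≤ ∑_{i<j} |A_{i,j} − B_{i,j}| · |Pf(M^{(i,j)}_{îĵ})|`, where `M^{(i,j)}`
is the interpolating antisymmetric matrix whose above-diagonal entries agree with `A`
for indices lexicographically `≤ (i,j)` and with `B` afterwards, and `M^{(i,j)}_{îĵ}`
is obtained by deleting rows and columns `i` and `j`. -/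
theorem pfaffian_telescoping {n : ℕ}
    (A B : Matrix (Fin (2 * (n + 1))) (Fin (2 * (n + 1))) ℝ)
    (hA : Aᵀ = -A) (hB : Bᵀ = -B) :
    |pfaffian A - pfaffian B| ≤
      ∑ i : Fin (2 * (n + 1)), ∑ j : Fin (2 * (n + 1)),
        if h : i < j then
          |A i j - B i j| * |pfMinor (interp A B i j) i j h.ne|
        else 0 := by
  have htele : pfaffian A - pfaffian B = ∑ t ∈ range (2 * (n + 1) * (2 * (n + 1))),
      (pfaffian (lexInterp A B (t + 1)) - pfaffian (lexInterp A B t)) := by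
    rw [sum_range_sub (fun t => pfaffian (lexInterp A B t)), lexInterp_mul_self hA,
      lexInterp_zero hB]
  calc |pfaffian A - pfaffian B|
      ≤ ∑ t ∈ range (2 * (n + 1) * (2 * (n + 1))),
          |pfaffian (lexInterp A B (t + 1)) - pfaffian (lexInterp A B t)| :=
        htele ▸ abs_sum_le_sum_abs _ _
    _ = _ := by
      rw [sum_range_mul_eq_sum_sum]
      simp only [abs_pfaffian_lexInterp_succ_sub]
end

section
/- Let (a_h)_{h ≤ 0} be a sequence of reals indexed by nonpositive integers satisfying the recursion a_{h} = a_{h+1} + b_{h+1} for h < 0, where |b_h| ≤ C ε 2^{θ h} max_{h' ≥ h} |a_{h'}| for constants C > 0, 0 < θ ≤ 1, and ε ≥ 0. If C ε ∑_{h ≤ 0} 2^{θ h} < 1, then: (i) sup_{h ≤ 0} |a_h| ≤ |a_0| / (1 - Cε∑_{h≤0}2^{θh}); (ii) the limit a_{-∞} = lim_{h → -∞} a_h exists; and (iii) |a_h - a_{-∞}| ≤ C' ε 2^{θ h} for a constant C' depending only on C, θ, and |a_0|. -/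
/-- Control of the beta-function flow: for a sequence `(a_h)_{h ≤ 0}` with
`a_h = a_{h+1} + b_{h+1}` and `|b_h| ≤ C ε 2^{θh} max_{h ≤ h' ≤ 0} |a_{h'}|`, if
`C ε ∑_{h ≤ 0} 2^{θh} < 1` then (i) `sup_{h ≤ 0}|a_h| ≤ |a_0|/(1 - Cε∑2^{θh})`,
(ii) the limit `a_{-∞} = lim_{h → -∞} a_h` exists, and (iii)
`|a_h - a_{-∞}| ≤ C' ε 2^{θh}` with `C'` depending only on `C`, `θ` and (a bound `A`
on) `|a_0|`. -/
theorem beta_function_flow (C θ A : ℝ) (hC : 0 < C) (hθ0 : 0 < θ) (hθ1 : θ ≤ 1)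
    (hA : 0 ≤ A) :
    ∃ C' : ℝ, 0 < C' ∧
      ∀ (ε : ℝ) (a b : ℤ → ℝ), 0 ≤ ε → |a 0| ≤ A →
        (∀ h : ℤ, h < 0 → a h = a (h + 1) + b (h + 1)) →
        (∀ h : ℤ, ∀ hh : h ≤ 0,
          |b h| ≤ C * ε * (2:ℝ) ^ (θ * (h:ℝ)) *
            (Finset.Icc h 0).sup' (Finset.nonempty_Icc.mpr hh) (fun h' => |a h'|)) →
        C * ε * (∑' n : ℕ, (2:ℝ) ^ (-θ * (n:ℝ))) < 1 →
        ((∀ h : ℤ, h ≤ 0 →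
            |a h| ≤ |a 0| / (1 - C * ε * (∑' n : ℕ, (2:ℝ) ^ (-θ * (n:ℝ))))) ∧
          ∃ l : ℝ, Filter.Tendsto (fun n : ℕ => a (-(n:ℤ))) Filter.atTop (nhds l) ∧
            ∀ h : ℤ, h ≤ 0 → |a h - l| ≤ C' * ε * (2:ℝ) ^ (θ * (h:ℝ))) := by
  set r : ℝ := (2:ℝ) ^ (-θ) with hr_def
  have hr0 : 0 < r := Real.rpow_pos_of_pos (by norm_num) _
  have hr1 : r < 1 := Real.rpow_lt_one_of_one_lt_of_neg (by norm_num) (by linarith)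
  have h1r : (0:ℝ) < 1 - r := by linarith
  refine ⟨C * (A * Real.exp 1) * (1 - r)⁻¹ + 1, by positivity, ?_⟩
  intro ε a b hε hA0 hrec hb hlt
  have hterm : ∀ n : ℕ, (2:ℝ) ^ (-θ * (n:ℝ)) = r ^ n := by
    intro n
    rw [hr_def, Real.rpow_mul (by norm_num), Real.rpow_natCast]
  have hS : (∑' n : ℕ, (2:ℝ) ^ (-θ * (n:ℝ))) = (1 - r)⁻¹ := by
    simp_rw [hterm]
    exact tsum_geometric_of_lt_one hr0.le hr1
  rw [hS] at hlt ⊢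
  set q : ℝ := C * ε * (1 - r)⁻¹ with hq_def
  have hq0 : 0 ≤ q := by positivity
  have hq1 : q < 1 := hlt
  -- exponent conversion for negative integers
  have hpow : ∀ n : ℕ, (2:ℝ) ^ (θ * ((-(n:ℤ) : ℤ) : ℝ)) = r ^ n := by
    intro n
    have : θ * ((-(n:ℤ) : ℤ) : ℝ) = -θ * (n:ℝ) := by push_cast; ring
    rw [this, hterm]
  -- recursion in ℕ form
  have frec : ∀ n : ℕ, a (-(n:ℤ) - 1) = a (-(n:ℤ)) + b (-(n:ℤ)) := by
    intro n
    have h := hrec (-(n:ℤ) - 1) (by omega)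
    rw [show (-(n:ℤ) - 1 + 1) = -(n:ℤ) by ring] at h
    exact h
  -- bound on b in ℕ form
  have hbn : ∀ n : ℕ, |b (-(n:ℤ))| ≤ C * ε * r ^ n *
      (Finset.Icc (-(n:ℤ)) 0).sup' (Finset.nonempty_Icc.mpr (by omega))
        (fun h' => |a h'|) := by
    intro n
    have h := hb (-(n:ℤ)) (by omega)
    rwa [hpow n] at h
  -- partial geometric sums are bounded by (1-r)⁻¹
  have hpsum : ∀ n : ℕ, (∑ k ∈ Finset.range n, r ^ k) ≤ (1 - r)⁻¹ := by
    intro n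
    calc (∑ k ∈ Finset.range n, r ^ k) ≤ ∑' k : ℕ, r ^ k :=
          Summable.sum_le_tsum _ (fun i _ => by positivity)
            (summable_geometric_of_lt_one hr0.le hr1)
      _ = (1 - r)⁻¹ := tsum_geometric_of_lt_one hr0.le hr1
  -- growth bound by strong induction
  have growth : ∀ n : ℕ, |a (-(n:ℤ))| ≤
      A * Real.exp (C * ε * (∑ k ∈ Finset.range n, r ^ k)) := by
    intro n
    induction n using Nat.strong_induction_on with
    | _ n ih =>
      match n with
      | 0 => simpa using hA0
      | Nat.succ m =>
        have hPmono : ∀ k ≤ m, C * ε * (∑ i ∈ Finset.range k, r ^ i) ≤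
            C * ε * (∑ i ∈ Finset.range m, r ^ i) := by
          intro k hk
          have : (∑ i ∈ Finset.range k, r ^ i) ≤ ∑ i ∈ Finset.range m, r ^ i :=
            Finset.sum_le_sum_of_subset_of_nonneg
              (Finset.range_subset_range.mpr hk) (fun i _ _ => by positivity)
          nlinarith [mul_nonneg hC.le hε]
        set E : ℝ := A * Real.exp (C * ε * (∑ i ∈ Finset.range m, r ^ i)) with hE_def
        have hE0 : 0 ≤ E := by positivity
        have hsup : (Finset.Icc (-(m:ℤ)) 0).sup' (Finset.nonempty_Icc.mpr (by omega))
            (fun h' => |a h'|) ≤ E := by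
          apply Finset.sup'_le
          intro h' hh'
          simp only [Finset.mem_Icc] at hh'
          obtain ⟨h1, h2⟩ := hh'
          have hk : h' = -(((-h').toNat : ℕ) : ℤ) := by omega
          have hkm : (-h').toNat ≤ m := by omega
          rw [hk]
          exact le_trans (ih _ (by omega)) (by
            have := hPmono _ hkm
            exact mul_le_mul_of_nonneg_left (Real.exp_le_exp.mpr this) hA)
        have ham : |a (-(m:ℤ))| ≤ E := by
          refine le_trans (ih m (by omega)) le_rfl
        have hbm : |b (-(m:ℤ))| ≤ C * ε * r ^ m * E := by
          refine le_trans (hbn m) ?_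
          exact mul_le_mul_of_nonneg_left hsup (by positivity)
        have hrecm : a (-((m+1 : ℕ):ℤ)) = a (-(m:ℤ)) + b (-(m:ℤ)) := by
          rw [show (-((m+1:ℕ):ℤ)) = -(m:ℤ) - 1 by push_cast; ring]
          exact frec m
        have h1 : |a (-((m+1:ℕ):ℤ))| ≤ E * (1 + C * ε * r ^ m) := by
          rw [hrecm]
          calc |a (-(m:ℤ)) + b (-(m:ℤ))| ≤ |a (-(m:ℤ))| + |b (-(m:ℤ))| := abs_add_le _ _
            _ ≤ E + C * ε * r ^ m * E := add_le_add ham hbm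
            _ = E * (1 + C * ε * r ^ m) := by ring
        calc |a (-((m+1:ℕ):ℤ))| ≤ E * (1 + C * ε * r ^ m) := h1
          _ ≤ E * Real.exp (C * ε * r ^ m) := by
              exact mul_le_mul_of_nonneg_left ((by
                have := Real.add_one_le_exp (C * ε * r ^ m)
                linarith) : (1:ℝ) + C * ε * r ^ m ≤ Real.exp (C * ε * r ^ m)) hE0
          _ = A * Real.exp (C * ε * (∑ i ∈ Finset.range (m+1), r ^ i)) := by
              rw [hE_def, mul_assoc, ← Real.exp_add, Finset.sum_range_succ, mul_add]
  -- global bound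
  have glob : ∀ h : ℤ, h ≤ 0 → |a h| ≤ A * Real.exp 1 := by
    intro h hh
    have hk : h = -(((-h).toNat : ℕ) : ℤ) := by omega
    rw [hk]
    refine le_trans (growth _) ?_
    refine mul_le_mul_of_nonneg_left (Real.exp_le_exp.mpr ?_) hA
    calc C * ε * (∑ k ∈ Finset.range ((-h).toNat), r ^ k) ≤ q := by
          have := hpsum ((-h).toNat)
          rw [hq_def]; nlinarith [mul_nonneg hC.le hε]
      _ ≤ 1 := hq1.le
  -- telescoping
  have tel : ∀ n : ℕ, a (-(n:ℤ)) = a 0 + ∑ k ∈ Finset.range n, b (-(k:ℤ)) := by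
    intro n
    induction n with
    | zero => simp
    | succ m ihm =>
      have : a (-((m+1:ℕ):ℤ)) = a (-(m:ℤ)) + b (-(m:ℤ)) := by
        rw [show (-((m+1:ℕ):ℤ)) = -(m:ℤ) - 1 by push_cast; ring]
        exact frec m
      rw [this, ihm, Finset.sum_range_succ]
      ring
  -- Part (i)
  have part1 : ∀ h : ℤ, h ≤ 0 → |a h| ≤ |a 0| / (1 - q) := by
    intro h hh
    set Mh : ℝ := (Finset.Icc h 0).sup' (Finset.nonempty_Icc.mpr hh)
      (fun h' => |a h'|) with hMh_def
    have hMh0 : 0 ≤ Mh := le_trans (abs_nonneg (a 0)) (by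
      rw [hMh_def]
      exact Finset.le_sup' (fun h' => |a h'|) (Finset.mem_Icc.mpr ⟨hh, le_rfl⟩))
    have key : Mh ≤ |a 0| + q * Mh := by
      apply Finset.sup'_le
      intro h' hh'
      simp only [Finset.mem_Icc] at hh'
      obtain ⟨h1, h2⟩ := hh'
      set m : ℕ := (-h').toNat with hm_def
      have hk : h' = -(m:ℤ) := by omega
      rw [hk, tel m]
      calc |a 0 + ∑ k ∈ Finset.range m, b (-(k:ℤ))|
          ≤ |a 0| + |∑ k ∈ Finset.range m, b (-(k:ℤ))| := abs_add_le _ _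
        _ ≤ |a 0| + ∑ k ∈ Finset.range m, |b (-(k:ℤ))| := by
            gcongr; exact Finset.abs_sum_le_sum_abs _ _
        _ ≤ |a 0| + ∑ k ∈ Finset.range m, C * ε * r ^ k * Mh := by
            gcongr with k hk'
            refine le_trans (hbn k) ?_
            refine mul_le_mul_of_nonneg_left ?_ (by positivity)
            refine Finset.sup'_mono _ ?_ _
            intro x hx
            simp only [Finset.mem_Icc] at hx ⊢
            simp only [Finset.mem_range] at hk'
            omega
        _ = |a 0| + C * ε * (∑ k ∈ Finset.range m, r ^ k) * Mh := by
            rw [Finset.mul_sum, Finset.sum_mul]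
        _ ≤ |a 0| + q * Mh := by
            gcongr |a 0| + ?_
            rw [hq_def]
            exact mul_le_mul_of_nonneg_right
              (mul_le_mul_of_nonneg_left (hpsum m) (mul_nonneg hC.le hε)) hMh0
    have hMle : Mh ≤ |a 0| / (1 - q) := by
      rw [le_div_iff₀ (by linarith)]
      nlinarith
    refine le_trans ?_ hMle
    rw [hMh_def]
    exact Finset.le_sup' (fun h' => |a h'|) (Finset.mem_Icc.mpr ⟨le_rfl, hh⟩)
  refine ⟨part1, ?_⟩
  -- geometric decay of differences
  set f : ℕ → ℝ := fun n => a (-(n:ℤ)) with hf_def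
  set K : ℝ := C * ε * (A * Real.exp 1) with hK_def
  have hK0 : 0 ≤ K := by positivity
  have hgeom : ∀ n : ℕ, dist (f n) (f (n+1)) ≤ K * r ^ n := by
    intro n
    have hrecn : f (n+1) = f n + b (-(n:ℤ)) := by
      simp only [hf_def]
      rw [show (-((n+1:ℕ):ℤ)) = -(n:ℤ) - 1 by push_cast; ring]
      exact frec n
    rw [Real.dist_eq, hrecn, show f n - (f n + b (-(n:ℤ))) = -(b (-(n:ℤ))) by ring,
      abs_neg]
    refine le_trans (hbn n) ?_
    have hsup : (Finset.Icc (-(n:ℤ)) 0).sup' (Finset.nonempty_Icc.mpr (by omega))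
        (fun h' => |a h'|) ≤ A * Real.exp 1 := by
      apply Finset.sup'_le
      intro h' hh'
      simp only [Finset.mem_Icc] at hh'
      exact glob h' hh'.2
    calc C * ε * r ^ n *
        (Finset.Icc (-(n:ℤ)) 0).sup' (Finset.nonempty_Icc.mpr (by omega))
          (fun h' => |a h'|)
        ≤ C * ε * r ^ n * (A * Real.exp 1) :=
          mul_le_mul_of_nonneg_left hsup (by positivity)
      _ = K * r ^ n := by rw [hK_def]; ring
  have hcauchy : CauchySeq f := cauchySeq_of_le_geometric r K hr1 hgeom
  obtain ⟨l, hl⟩ := cauchySeq_tendsto_of_complete hcauchy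
  refine ⟨l, hl, ?_⟩
  intro h hh
  set n : ℕ := (-h).toNat with hn_def
  have hk : h = -(n:ℤ) := by omega
  have hdist := dist_le_of_le_geometric_of_tendsto r K hr1 hgeom hl n
  rw [Real.dist_eq] at hdist
  have hpowh : (2:ℝ) ^ (θ * (h:ℝ)) = r ^ n := by
    rw [hk]; exact hpow n
  rw [hpowh, hk]
  calc |a (-(n:ℤ)) - l| ≤ K * r ^ n / (1 - r) := hdist
    _ = C * (A * Real.exp 1) * (1 - r)⁻¹ * ε * r ^ n := by
        rw [hK_def]; field_simp
    _ ≤ (C * (A * Real.exp 1) * (1 - r)⁻¹ + 1) * ε * r ^ n := by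
        have : (0:ℝ) ≤ ε * r ^ n := by positivity
        nlinarith
end
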